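/- arXiv:2510.26063 — 4 statements merged into one kernel-verified Lean document; each statement's English description precedes it below -/
import Mathlib

section
/- Let N ≥ 1 and 1 ≤ k ≤ N, and let L : Fin N → ℝ. Then S_k(L), the sum of the k largest values of L, equals the minimum over all t ∈ ℝ and λ : Fin N → ℝ satisfying λ_i ≥ L_i − t and λ_i ≥ 0 for every i, of the quantity k·t + Σ_{i} λ_i; that is, S_k(L) = min { k·t + Σ_i λ_i : t ∈ ℝ, λ_i ≥ max(L_i − t, 0) for all i }, and this minimum is attained. -/
open Finset

/-- The values of `L : Fin N → ℝ` rearranged in nonincreasing order. -/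
noncomputable def sortedDesc {N : ℕ} (L : Fin N → ℝ) : Fin N → ℝ :=
  fun j => L (Tuple.sort L j.rev)

/-- The `k`-th largest value (with `k` 1-indexed) of `L : Fin N → ℝ`. -/
noncomputable def kthLargest {N : ℕ} (L : Fin N → ℝ) (k : ℕ) (h : k - 1 < N) : ℝ :=
  sortedDesc L ⟨k - 1, h⟩

/-- The sum of the `k` largest values of `L : Fin N → ℝ`. -/
noncomputable def sumKLargest {N : ℕ} (L : Fin N → ℝ) (k : ℕ) : ℝ :=
  ∑ j ∈ Finset.univ.filter (fun j : Fin N => (j : ℕ) < k), sortedDesc L j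

/-!
For every threshold `t`, the `k` largest values exceed `t` in total by `S_k(L) - k t`, and this
is at most the total excess `∑ i, max (L i - t) 0` of all values over `t`; so every feasible
point has value at least `S_k(L)`. Equality holds when `t` separates the `k` largest values from
the others, e.g. `t = L_(k+1)` (or `t = min L` when `k = N`), with `lam i = max (L i - t) 0`.
-/

namespace SumKLargest

variable {N k : ℕ} (L : Fin N → ℝ)

theorem sortedDesc_antitone : Antitone (sortedDesc L) :=
  fun _ _ hab => Tuple.monotone_sort L (Fin.rev_le_rev.mpr hab)

theorem sum_comp_sortedDesc (f : ℝ → ℝ) : ∑ j, f (sortedDesc L j) = ∑ i, f (L i) :=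
  Fintype.sum_equiv (Fin.revPerm.trans (Tuple.sort L)) _ _ fun _ => rfl

theorem sum_sortedDesc_sub (hkN : k ≤ N) (t : ℝ) :
    ∑ j ∈ univ.filter (fun j : Fin N => (j : ℕ) < k), (sortedDesc L j - t) =
      sumKLargest L k - k * t := by
  rw [sum_sub_distrib, sum_const, Fin.card_filter_val_lt, min_eq_right hkN, nsmul_eq_mul,
    sumKLargest]

theorem sumKLargest_le (hkN : k ≤ N) (t : ℝ) :
    sumKLargest L k ≤ k * t + ∑ i, max (L i - t) 0 := by
  have hexcess : ∑ j ∈ univ.filter (fun j : Fin N => (j : ℕ) < k), (sortedDesc L j - t) ≤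
      ∑ i, max (L i - t) 0 := by
    rw [← sum_comp_sortedDesc L fun x => max (x - t) 0]
    calc _ ≤ ∑ j ∈ univ.filter (fun j : Fin N => (j : ℕ) < k), max (sortedDesc L j - t) 0 :=
          sum_le_sum fun _ _ => le_max_left _ _
      _ ≤ ∑ j, max (sortedDesc L j - t) 0 :=
          sum_le_sum_of_subset_of_nonneg (filter_subset _ _) fun _ _ _ => le_max_right _ _
  rw [sum_sortedDesc_sub L hkN] at hexcess
  linarith

/-- `t` lies between the `k`-th and the `(k+1)`-th largest value of `L`. -/
def IsThreshold (k : ℕ) (t : ℝ) : Prop :=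
  (∀ j : Fin N, (j : ℕ) < k → t ≤ sortedDesc L j) ∧ ∀ j : Fin N, k ≤ (j : ℕ) → sortedDesc L j ≤ t

theorem exists_isThreshold (hkN : k ≤ N) : ∃ t, IsThreshold L k t := by
  rcases hkN.lt_or_eq with hlt | rfl
  · refine ⟨sortedDesc L ⟨k, hlt⟩, fun j hj => ?_, fun j hj => ?_⟩ <;>
      apply sortedDesc_antitone L <;> simp only [Fin.le_def] <;> omega
  · exact ⟨⨅ j, sortedDesc L j, fun j _ => ciInf_le (Finite.bddBelow_range _) j,
      fun j hj => absurd j.isLt (not_lt.mpr hj)⟩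

theorem mul_add_sum_max_eq_sumKLargest (hkN : k ≤ N) {t : ℝ} (ht : IsThreshold L k t) :
    k * t + ∑ i, max (L i - t) 0 = sumKLargest L k := by
  have hexcess : ∀ j : Fin N,
      max (sortedDesc L j - t) 0 = if (j : ℕ) < k then sortedDesc L j - t else 0 := by
    intro j
    split_ifs with hj
    · exact max_eq_left (sub_nonneg.mpr (ht.1 j hj))
    · exact max_eq_right (sub_nonpos.mpr (ht.2 j (not_lt.mp hj)))
  rw [← sum_comp_sortedDesc L fun x => max (x - t) 0]
  simp only [hexcess]
  rw [← sum_filter, sum_sortedDesc_sub L hkN]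
  ring

end SumKLargest

open SumKLargest in
theorem sumKLargest_isLeast_general (N k : ℕ) (hkN : k ≤ N)
    (L : Fin N → ℝ) :
    IsLeast { x : ℝ | ∃ (t : ℝ) (lam : Fin N → ℝ),
        (∀ i, lam i ≥ L i - t) ∧ (∀ i, lam i ≥ 0) ∧ x = (k : ℝ) * t + ∑ i, lam i }
      (sumKLargest L k) := by
  obtain ⟨t, ht⟩ := exists_isThreshold L hkN
  refine ⟨⟨t, fun i => max (L i - t) 0, fun i => le_max_left _ _, fun i => le_max_right _ _,
    (mul_add_sum_max_eq_sumKLargest L hkN ht).symm⟩, ?_⟩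
  rintro x ⟨s, lam, hlam_ge, hlam_nonneg, rfl⟩
  calc sumKLargest L k ≤ k * s + ∑ i, max (L i - s) 0 := sumKLargest_le L hkN s
    _ ≤ k * s + ∑ i, lam i := by
      gcongr with i
      exact max_le (hlam_ge i) (hlam_nonneg i)

/-- Ogryczak–Tamir: the sum of the `k` largest values of `L` is the
minimum, over all `t : ℝ` and `lam : Fin N → ℝ` with `lam i ≥ L i - t` and `lam i ≥ 0`
for every `i`, of `k * t + ∑ i, lam i`; and this minimum is attained. -/
theorem sumKLargest_isLeast (N k : ℕ) (hN : 1 ≤ N) (hk1 : 1 ≤ k) (hkN : k ≤ N)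
    (L : Fin N → ℝ) :
    IsLeast { x : ℝ | ∃ (t : ℝ) (lam : Fin N → ℝ),
        (∀ i, lam i ≥ L i - t) ∧ (∀ i, lam i ≥ 0) ∧ x = (k : ℝ) * t + ∑ i, lam i }
      (sumKLargest L k) :=
  sumKLargest_isLeast_general N k hkN L
end

section
/- Let N ≥ 1 and 1 ≤ k ≤ N, let L : Fin N → ℝ, and let t ∈ ℝ and λ : Fin N → ℝ satisfy λ_i ≥ L_i − t and λ_i ≥ 0 for every i. Then k·t + Σ_i λ_i ≥ S_k(L), the sum of the k largest values of L. In particular, for any such feasible pair (t, λ), the quantity (1/k)(k·t + Σ_i λ_i) is an upper bound on the empirical expected shortfall EES_{1−k/N}(L) = S_k(L)/k. -/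
open Finset

/-! The `k` largest values of `L` are the values of `L` on some `k`-element set of indices;
any feasible `(t, λ)` bounds the sum of `L` over any such set, since
`L i ≤ t + λ i` there and `λ ≥ 0` elsewhere. -/

theorem exists_card_eq_sumKLargest_eq_sum {N : ℕ} (L : Fin N → ℝ) (k : ℕ) :
    ∃ s : Finset (Fin N), #s = min N k ∧ sumKLargest L k = ∑ i ∈ s, L i := by
  have hinj : Function.Injective fun j : Fin N => Tuple.sort L j.rev :=
    (Tuple.sort L).injective.comp Fin.rev_injective
  refine ⟨(univ.filter fun j : Fin N => (j : ℕ) < k).image fun j => Tuple.sort L j.rev, ?_, ?_⟩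
  · rw [card_image_of_injective _ hinj, Fin.card_filter_val_lt]
  · rw [sum_image fun a _ b _ h => hinj h]
    rfl

theorem sum_le_card_mul_add_sum {ι : Type*} [Fintype ι] (s : Finset ι) (L lam : ι → ℝ) (t : ℝ)
    (hL : ∀ i, L i ≤ t + lam i) (hlam : ∀ i, 0 ≤ lam i) :
    ∑ i ∈ s, L i ≤ #s * t + ∑ i, lam i :=
  calc ∑ i ∈ s, L i ≤ ∑ i ∈ s, (t + lam i) := sum_le_sum fun i _ => hL i
    _ = #s * t + ∑ i ∈ s, lam i := by rw [sum_add_distrib, sum_const, nsmul_eq_mul]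
    _ ≤ #s * t + ∑ i, lam i :=
      add_le_add_right (sum_le_sum_of_subset_of_nonneg (subset_univ s) fun i _ _ => hlam i) _

theorem feasible_ge_sumKLargest_general (N k : ℕ) (hkN : k ≤ N)
    (L : Fin N → ℝ) (t : ℝ) (lam : Fin N → ℝ)
    (h1 : ∀ i, lam i ≥ L i - t) (h2 : ∀ i, lam i ≥ 0) :
    (k : ℝ) * t + ∑ i, lam i ≥ sumKLargest L k ∧
      (1 / (k : ℝ)) * ((k : ℝ) * t + ∑ i, lam i) ≥ sumKLargest L k / k := by
  obtain ⟨s, hs, hsum⟩ := exists_card_eq_sumKLargest_eq_sum L k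
  rw [min_eq_right hkN] at hs
  have bound : sumKLargest L k ≤ k * t + ∑ i, lam i := by
    rw [hsum, ← hs]
    exact sum_le_card_mul_add_sum s L lam t (fun i => by linarith [h1 i]) h2
  refine ⟨bound, ?_⟩
  rw [one_div_mul_eq_div]
  exact div_le_div_of_nonneg_right bound k.cast_nonneg

/-- any feasible pair `(t, lam)` (i.e. `lam i ≥ L i - t`, `lam i ≥ 0`)
gives `k * t + ∑ i, lam i ≥ S_k(L)`, and hence `(1/k) * (k * t + ∑ i, lam i)` is an
upper bound on the empirical expected shortfall `EES = S_k(L) / k`. -/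
theorem feasible_ge_sumKLargest (N k : ℕ) (hN : 1 ≤ N) (hk1 : 1 ≤ k) (hkN : k ≤ N)
    (L : Fin N → ℝ) (t : ℝ) (lam : Fin N → ℝ)
    (h1 : ∀ i, lam i ≥ L i - t) (h2 : ∀ i, lam i ≥ 0) :
    (k : ℝ) * t + ∑ i, lam i ≥ sumKLargest L k ∧
      (1 / (k : ℝ)) * ((k : ℝ) * t + ∑ i, lam i) ≥ sumKLargest L k / k :=
  feasible_ge_sumKLargest_general N k hkN L t lam h1 h2
end

section
/- Let N ≥ 1 and 1 ≤ k ≤ N, and let L : Fin N → ℝ. Set t* := L_(k), the k-th largest value of L, and λ*_i := max(L_i − t*, 0) for each i. Then (t*, λ*) satisfies the constraints λ*_i ≥ L_i − t* and λ*_i ≥ 0 for all i, and k·t* + Σ_i λ*_i = S_k(L), the sum of the k largest values of L. -/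
open Finset

/-! Sort `L` in nonincreasing order and put `t := L_(k)`. Then `max (L_(j) - t) 0` equals
`L_(j) - t` for the first `k` positions and `0` afterwards, so `∑ i, max (L i - t) 0` is
`S_k(L) - k * t`. -/

lemma sortedDesc_antitone {N : ℕ} (L : Fin N → ℝ) : Antitone (sortedDesc L) :=
  fun _ _ hab => Tuple.monotone_sort L (Fin.rev_le_rev.mpr hab)

lemma sum_comp_sortedDesc {M : Type*} [AddCommMonoid M] {N : ℕ} (L : Fin N → ℝ) (f : ℝ → M) :
    ∑ j, f (sortedDesc L j) = ∑ i, f (L i) :=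
  Equiv.sum_comp (Fin.revPerm.trans (Tuple.sort L)) (fun i => f (L i))

lemma max_sub_sortedDesc_eq_ite {N : ℕ} (L : Fin N → ℝ) (m j : Fin N) :
    max (sortedDesc L j - sortedDesc L m) 0 =
      if (j : ℕ) < m + 1 then sortedDesc L j - sortedDesc L m else 0 := by
  split_ifs with hj
  · exact max_eq_left (sub_nonneg.mpr (sortedDesc_antitone L (Fin.le_def.mpr (by omega))))
  · exact max_eq_right (sub_nonpos.mpr (sortedDesc_antitone L (Fin.le_def.mpr (by omega))))

lemma sumKLargest_succ_eq {N : ℕ} (L : Fin N → ℝ) (m : Fin N) :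
    sumKLargest L (m + 1) =
      ((m : ℕ) + 1 : ℕ) * sortedDesc L m + ∑ i, max (L i - sortedDesc L m) 0 := by
  have hcard : #{j : Fin N | (j : ℕ) < m + 1} = (m : ℕ) + 1 := by
    rw [Fin.card_filter_val_lt]; omega
  rw [← sum_comp_sortedDesc L (fun x => max (x - sortedDesc L m) 0)]
  simp only [max_sub_sortedDesc_eq_ite L m, ← sum_filter, sum_sub_distrib, sum_const, hcard,
    nsmul_eq_mul, sumKLargest]
  ring

/-- with `t* := L_(k)` (the `k`-th largest value of `L`) and
`λ*_i := max (L i - t*) 0`, the pair `(t*, λ*)` is feasible and achieves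
`k * t* + ∑ i, λ*_i = S_k(L)`. -/
theorem optimal_pair_achieves_sumKLargest (N k : ℕ) (hk1 : 1 ≤ k) (hkN : k ≤ N)
    (L : Fin N → ℝ) :
    (∀ i, max (L i - kthLargest L k (by omega)) 0 ≥ L i - kthLargest L k (by omega)) ∧
      (∀ i, max (L i - kthLargest L k (by omega)) 0 ≥ 0) ∧
      (k : ℝ) * kthLargest L k (by omega) +
          ∑ i, max (L i - kthLargest L k (by omega)) 0 = sumKLargest L k := by
  refine ⟨fun i => le_max_left _ _, fun i => le_max_right _ _, ?_⟩
  have hk : k - 1 + 1 = k := by omega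
  simpa only [kthLargest, hk, eq_comm] using sumKLargest_succ_eq L ⟨k - 1, by omega⟩
end

section
/- Let m ≥ 1 be an integer, let k be an integer with 0 ≤ k ≤ m − 1, and let β ∈ (0,1). The equation C(m,k) t^{m−k} − (β/(2m)) Σ_{i=k}^{m−1} C(i,k) t^{i−k} − (β/(6m)) Σ_{i=m+1}^{4m} C(i,k) t^{i−k} = 0 has exactly two solutions in [0, +∞); that is, the set of nonnegative zeros of this polynomial in t has cardinality two. -/
/-!
For `t > 0` the equation reads `Z(t) = C(m,k)`, where `t^(m-k) Z(t)` collects the `β`-terms. `Z` is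
a positive combination of the powers `t^(i-m)`, strictly convex on `(0, ∞)` thanks to `t^(k-m)`,
so it takes the value `C(m,k)` at most twice. Two roots exist by the intermediate value theorem:
the polynomial is negative at `0` and for large `t`, and positive at `t₀ = (m+1-k)/(m+1)`, where
every term `C(i,k) t₀^(i-k)` is at most `C(m,k) t₀^(m-k)`, so the `β`-terms total at most `β` times
the leading one.
-/

open Finset

theorem convexOn_finset_sum {𝕜 E β ι : Type*} [Semiring 𝕜] [PartialOrder 𝕜] [AddCommMonoid E]
    [SMul 𝕜 E] [AddCommMonoid β] [PartialOrder β] [IsOrderedAddMonoid β] [Module 𝕜 β]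
    {s : Set E} {t : Finset ι} {f : ι → E → β} (hs : Convex 𝕜 s)
    (hf : ∀ i ∈ t, ConvexOn 𝕜 s (f i)) : ConvexOn 𝕜 s (∑ i ∈ t, f i) := by
  classical
  induction t using Finset.induction_on with
  | empty => exact convexOn_const 0 hs
  | insert j t hj ih =>
    rw [sum_insert hj]
    exact (hf j (mem_insert_self j t)).add (ih fun i hi => hf i (mem_insert_of_mem hi))

theorem strictConvexOn_finset_sum {𝕜 E β ι : Type*} [Semiring 𝕜] [PartialOrder 𝕜]
    [AddCommMonoid E] [SMul 𝕜 E] [AddCommMonoid β] [PartialOrder β] [IsOrderedCancelAddMonoid β]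
    [Module 𝕜 β] {s : Set E} {t : Finset ι} {f : ι → E → β} {j : ι} (hj : j ∈ t)
    (hfj : StrictConvexOn 𝕜 s (f j)) (hf : ∀ i ∈ t, ConvexOn 𝕜 s (f i)) :
    StrictConvexOn 𝕜 s (∑ i ∈ t, f i) := by
  classical
  rw [← add_sum_erase t f hj]
  exact hfj.add_convexOn (convexOn_finset_sum hfj.1 fun i hi => hf i (mem_of_mem_erase hi))

theorem StrictConvexOn.const_mul {E : Type*} [AddCommMonoid E] [SMul ℝ E] {s : Set E}
    {f : E → ℝ} {c : ℝ} (hc : 0 < c) (hf : StrictConvexOn ℝ s f) :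
    StrictConvexOn ℝ s fun x => c * f x :=
  ⟨hf.1, fun x hx y hy hxy a b ha hb hab => by
    simpa only [smul_eq_mul, mul_add, mul_left_comm c] using
      mul_lt_mul_of_pos_left (hf.2 hx hy hxy ha hb hab) hc⟩

theorem StrictConvexOn.eq_or_eq_of_apply_eq {s : Set ℝ} {f : ℝ → ℝ}
    (hf : StrictConvexOn ℝ s f) {x y z : ℝ} (hx : x ∈ s) (hy : y ∈ s) (hz : z ∈ s)
    (hxy : x < y) (hfy : f y = f x) (hfz : f z = f x) : z = x ∨ z = y := by
  by_contra! hne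
  rcases hne.1.lt_or_gt with hzx | hxz
  · have := hf.lt_on_openSegment hz hy (hzx.trans hxy).ne (Ioo_subset_openSegment ⟨hzx, hxy⟩)
    simp_all
  rcases hne.2.lt_or_gt with hzy | hyz
  · have := hf.lt_on_openSegment hx hy hxy.ne (Ioo_subset_openSegment ⟨hxz, hzy⟩)
    simp_all
  · have := hf.lt_on_openSegment hx hz (hxy.trans hyz).ne (Ioo_subset_openSegment ⟨hxy, hyz⟩)
    simp_all

theorem apply_le_of_le_succ_of_succ_le {α : Type*} [Preorder α] {f : ℕ → α} {m : ℕ}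
    (hup : ∀ i < m, f i ≤ f (i + 1)) (hdown : ∀ i ≥ m, f (i + 1) ≤ f i) (i : ℕ) : f i ≤ f m := by
  rcases le_total i m with him | hmi
  · exact monotoneOn_of_le_add_one Set.ordConnected_Iic (fun a _ _ ha => hup a ha) him
      Set.self_mem_Iic him
  · exact antitoneOn_of_add_one_le Set.ordConnected_Ici (fun a _ ha _ => hdown a ha)
      Set.self_mem_Ici hmi hmi

theorem cast_sub_mul_choose_succ {k i : ℕ} (hki : k ≤ i) :
    ((i : ℝ) + 1 - k) * (i + 1).choose k = (i + 1) * i.choose k := by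
  have h := Nat.choose_mul_succ_eq i k
  rw [← Nat.cast_inj (R := ℝ)] at h
  push_cast [Nat.cast_sub (show k ≤ i + 1 by omega)] at h
  linarith

/-- The ratio of consecutive terms of `i ↦ C(i,k) xⁱ` is `(i+1) x / (i+1-k)`, which crosses `1`
exactly at `i = m`. -/
theorem choose_mul_pow_le {k m : ℕ} (hkm : k ≤ m) (i : ℕ) :
    (i.choose k : ℝ) * (((m : ℝ) + 1 - k) / (m + 1)) ^ i
      ≤ m.choose k * (((m : ℝ) + 1 - k) / (m + 1)) ^ m := by
  set x : ℝ := ((m : ℝ) + 1 - k) / (m + 1)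
  have hkmR : (k : ℝ) ≤ m := by exact_mod_cast hkm
  have hx : 0 ≤ x := div_nonneg (by linarith) (by positivity)
  have hxm : x * (m + 1) = m + 1 - k := div_mul_cancel₀ _ (by positivity)
  have step : ∀ i, k ≤ i → ((m : ℝ) + 1) * (i + 1 - k) *
      ((i + 1).choose k * x ^ (i + 1) - i.choose k * x ^ i)
        = k * (m - i) * (i.choose k * x ^ i) := by
    intro i hki
    linear_combination (x * x ^ i) * (m + 1 : ℝ) * cast_sub_mul_choose_succ hki
      + (i + 1 : ℝ) * (i.choose k * x ^ i) * hxm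
  refine apply_le_of_le_succ_of_succ_le (f := fun i => (i.choose k : ℝ) * x ^ i) ?_ ?_ i
  · intro i him
    rcases lt_or_ge i k with hik | hki
    · simp only [Nat.choose_eq_zero_of_lt hik, Nat.cast_zero, zero_mul]
      positivity
    have hiR : (i : ℝ) ≤ m := by exact_mod_cast him.le
    have hkiR : (k : ℝ) ≤ i := by exact_mod_cast hki
    have hP : 0 < ((m : ℝ) + 1) * (i + 1 - k) := mul_pos (by positivity) (by linarith)
    refine sub_nonneg.mp (nonneg_of_mul_nonneg_right ?_ hP)
    rw [step i hki]
    have := sub_nonneg.2 hiR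
    positivity
  · intro i hmi
    have hki : k ≤ i := hkm.trans hmi
    have hiR : (m : ℝ) ≤ i := by exact_mod_cast hmi
    have hkiR : (k : ℝ) ≤ i := by exact_mod_cast hki
    have hP : 0 < ((m : ℝ) + 1) * (i + 1 - k) := mul_pos (by positivity) (by linarith)
    refine sub_nonpos.mp (nonpos_of_mul_nonpos_right ?_ hP)
    rw [step i hki]
    exact mul_nonpos_of_nonpos_of_nonneg
      (mul_nonpos_of_nonneg_of_nonpos (Nat.cast_nonneg k) (sub_nonpos.2 hiR)) (by positivity)

theorem choose_mul_pow_sub_le {k m i : ℕ} (hkm : k ≤ m) (hki : k ≤ i) :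
    (i.choose k : ℝ) * (((m : ℝ) + 1 - k) / (m + 1)) ^ (i - k)
      ≤ m.choose k * (((m : ℝ) + 1 - k) / (m + 1)) ^ (m - k) := by
  have hkmR : (k : ℝ) ≤ m := by exact_mod_cast hkm
  have hx : 0 < ((m : ℝ) + 1 - k) / (m + 1) := div_pos (by linarith) (by positivity)
  refine le_of_mul_le_mul_right ?_ (pow_pos hx k)
  rw [mul_assoc, mul_assoc, pow_sub_mul_pow _ hki, pow_sub_mul_pow _ hkm]
  exact choose_mul_pow_le hkm i

noncomputable def riskPoly (m k : ℕ) (β t : ℝ) : ℝ :=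
  (m.choose k : ℝ) * t ^ (m - k)
    - (β / (2 * m)) * ∑ i ∈ Icc k (m - 1), (i.choose k : ℝ) * t ^ (i - k)
    - (β / (6 * m)) * ∑ i ∈ Icc (m + 1) (4 * m), (i.choose k : ℝ) * t ^ (i - k)

noncomputable def riskPolyTail (m k : ℕ) (β t : ℝ) : ℝ :=
  (β / (2 * m)) * ∑ i ∈ Icc k (m - 1), (i.choose k : ℝ) * t ^ ((i : ℤ) - m)
    + (β / (6 * m)) * ∑ i ∈ Icc (m + 1) (4 * m), (i.choose k : ℝ) * t ^ ((i : ℤ) - m)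

variable {m k : ℕ} {β : ℝ}

theorem continuous_riskPoly (m k : ℕ) (β : ℝ) : Continuous (riskPoly m k β) := by
  unfold riskPoly
  fun_prop

theorem riskPoly_zero (hkm : k < m) : riskPoly m k β 0 = -(β / (2 * m)) := by
  have hlow : ∑ i ∈ Icc k (m - 1), (i.choose k : ℝ) * 0 ^ (i - k) = 1 := by
    rw [sum_eq_single_of_mem k (mem_Icc.mpr ⟨le_rfl, by omega⟩)]
    · simp
    · intro i hi hik
      rw [zero_pow (by grind), mul_zero]
  have hhigh : ∑ i ∈ Icc (m + 1) (4 * m), (i.choose k : ℝ) * 0 ^ (i - k) = 0 :=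
    sum_eq_zero fun i hi => by rw [zero_pow (by grind), mul_zero]
  rw [riskPoly, hlow, hhigh, zero_pow (by omega)]
  ring

theorem riskPoly_pos (hkm : k < m) (hβ0 : 0 ≤ β) (hβ1 : β < 1) :
    0 < riskPoly m k β (((m : ℝ) + 1 - k) / (m + 1)) := by
  set x : ℝ := ((m : ℝ) + 1 - k) / (m + 1)
  set M : ℝ := m.choose k * x ^ (m - k)
  have hkmR : (k : ℝ) < m := by exact_mod_cast hkm
  have hM : 0 < M := mul_pos (by exact_mod_cast Nat.choose_pos hkm.le)
    (pow_pos (div_pos (by linarith) (by positivity)) _)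
  have hlow : ∑ i ∈ Icc k (m - 1), (i.choose k : ℝ) * x ^ (i - k) ≤ m * M := by
    refine (sum_le_card_nsmul _ _ M fun i hi =>
      choose_mul_pow_sub_le hkm.le (mem_Icc.1 hi).1).trans ?_
    rw [nsmul_eq_mul, Nat.card_Icc]
    gcongr
    exact_mod_cast (by omega : m - 1 + 1 - k ≤ m)
  have hhigh : ∑ i ∈ Icc (m + 1) (4 * m), (i.choose k : ℝ) * x ^ (i - k) ≤ 3 * m * M := by
    refine (sum_le_card_nsmul _ _ M fun i hi =>
      choose_mul_pow_sub_le hkm.le (by grind)).trans ?_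
    rw [nsmul_eq_mul, Nat.card_Icc]
    gcongr
    exact_mod_cast (by omega : 4 * m + 1 - (m + 1) ≤ 3 * m)
  have hmR : (0 : ℝ) < m := by linarith [(Nat.cast_nonneg k : (0 : ℝ) ≤ k)]
  have h1 : β / (2 * m) * (m * M) = β * M / 2 := by field_simp
  have h2 : β / (6 * m) * (3 * m * M) = β * M / 2 := by field_simp; ring
  calc 0 < (1 - β) * M := mul_pos (by linarith) hM
    _ = M - β / (2 * m) * (m * M) - β / (6 * m) * (3 * m * M) := by rw [h1, h2]; ring
    _ ≤ riskPoly m k β x := by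
      unfold riskPoly
      gcongr

theorem riskPoly_neg (hkm : k < m) (hβ : 0 < β) : riskPoly m k β (1 + 6 * m / β) < 0 := by
  set B : ℝ := 1 + 6 * m / β
  have hmR : (0 : ℝ) < m := by exact_mod_cast (Nat.zero_le k).trans_lt hkm
  have hB : 1 ≤ B := le_add_of_nonneg_right (by positivity)
  have hβB : β / (6 * m) * B = β / (6 * m) + 1 := by simp only [B]; field_simp
  have hlow : 0 ≤ ∑ i ∈ Icc k (m - 1), (i.choose k : ℝ) * B ^ (i - k) := by positivity
  have htop : ((4 * m).choose k : ℝ) * B ^ (4 * m - k)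
      ≤ ∑ i ∈ Icc (m + 1) (4 * m), (i.choose k : ℝ) * B ^ (i - k) :=
    single_le_sum (f := fun i => (i.choose k : ℝ) * B ^ (i - k)) (fun i _ => by positivity)
      (mem_Icc.mpr ⟨by omega, le_rfl⟩)
  have hgrow :
      (m.choose k : ℝ) * B ^ (m - k) * B ≤ ((4 * m).choose k : ℝ) * B ^ (4 * m - k) := by
    rw [mul_assoc, ← pow_succ]
    gcongr <;> omega
  have hM : 0 < (m.choose k : ℝ) * B ^ (m - k) :=
    mul_pos (by exact_mod_cast Nat.choose_pos hkm.le) (by positivity)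
  calc riskPoly m k β B
      ≤ m.choose k * B ^ (m - k) - β / (6 * m) * (((m.choose k : ℝ) * B ^ (m - k)) * B) := by
        unfold riskPoly
        have := mul_le_mul_of_nonneg_left (hgrow.trans htop) (by positivity : 0 ≤ β / (6 * m))
        nlinarith [mul_nonneg (by positivity : 0 ≤ β / (2 * m)) hlow]
    _ = -(β / (6 * m) * (m.choose k * B ^ (m - k))) := by
        rw [mul_comm _ B, ← mul_assoc, hβB]; ring
    _ < 0 := neg_neg_of_pos (by positivity)

theorem riskPoly_eq_pow_mul (hkm : k ≤ m) {t : ℝ} (ht : t ≠ 0) :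
    riskPoly m k β t = t ^ (m - k) * (m.choose k - riskPolyTail m k β t) := by
  have hpow : ∀ i, k ≤ i → t ^ (i - k) = t ^ (m - k) * t ^ ((i : ℤ) - m) := by
    intro i hki
    rw [← zpow_natCast, ← zpow_natCast, ← zpow_add₀ ht]
    congr 1
    push_cast [hki, hkm]
    ring
  have hlow : ∑ i ∈ Icc k (m - 1), (i.choose k : ℝ) * t ^ (i - k)
      = t ^ (m - k) * ∑ i ∈ Icc k (m - 1), (i.choose k : ℝ) * t ^ ((i : ℤ) - m) := by
    rw [mul_sum]
    refine sum_congr rfl fun i hi => ?_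
    rw [hpow i (mem_Icc.1 hi).1]
    ring
  have hhigh : ∑ i ∈ Icc (m + 1) (4 * m), (i.choose k : ℝ) * t ^ (i - k)
      = t ^ (m - k) * ∑ i ∈ Icc (m + 1) (4 * m), (i.choose k : ℝ) * t ^ ((i : ℤ) - m) := by
    rw [mul_sum]
    refine sum_congr rfl fun i hi => ?_
    rw [hpow i (by grind)]
    ring
  rw [riskPoly, riskPolyTail, hlow, hhigh]
  ring

theorem strictConvexOn_riskPolyTail (hkm : k < m) (hβ : 0 < β) :
    StrictConvexOn ℝ (Set.Ioi 0) (riskPolyTail m k β) := by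
  have hmR : (0 : ℝ) < m := by exact_mod_cast (Nat.zero_le k).trans_lt hkm
  have hterm : ∀ i : ℕ,
      ConvexOn ℝ (Set.Ioi 0) fun t : ℝ => (i.choose k : ℝ) * t ^ ((i : ℤ) - m) :=
    fun i => (convexOn_zpow _).smul (Nat.cast_nonneg _)
  have hlow : StrictConvexOn ℝ (Set.Ioi 0)
      (∑ i ∈ Icc k (m - 1), fun t : ℝ => (i.choose k : ℝ) * t ^ ((i : ℤ) - m)) :=
    strictConvexOn_finset_sum (mem_Icc.mpr ⟨le_rfl, by omega⟩)
      ((strictConvexOn_zpow (by omega) (by omega)).const_mul (by simp)) fun i _ => hterm i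
  have hhigh : ConvexOn ℝ (Set.Ioi 0)
      (∑ i ∈ Icc (m + 1) (4 * m), fun t : ℝ => (i.choose k : ℝ) * t ^ ((i : ℤ) - m)) :=
    convexOn_finset_sum (convex_Ioi 0) fun i _ => hterm i
  rw [sum_fn] at hlow hhigh
  exact (hlow.const_mul (by positivity)).add_convexOn (hhigh.smul (by positivity))

theorem riskPoly_eq_zero_iff (hkm : k ≤ m) {t : ℝ} (ht : t ≠ 0) :
    riskPoly m k β t = 0 ↔ riskPolyTail m k β t = m.choose k := by
  rw [riskPoly_eq_pow_mul hkm ht, mul_eq_zero, sub_eq_zero, or_iff_right (pow_ne_zero _ ht),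
    eq_comm]

theorem eq_or_eq_of_riskPoly_eq_zero (hkm : k < m) (hβ : 0 < β) {r₁ r₂ t : ℝ} (hr₁ : 0 < r₁)
    (hr₁₂ : r₁ < r₂) (h₁ : riskPoly m k β r₁ = 0) (h₂ : riskPoly m k β r₂ = 0) (ht : 0 < t)
    (h : riskPoly m k β t = 0) : t = r₁ ∨ t = r₂ := by
  have hr₂ : 0 < r₂ := hr₁.trans hr₁₂
  rw [riskPoly_eq_zero_iff hkm.le hr₁.ne'] at h₁
  rw [riskPoly_eq_zero_iff hkm.le hr₂.ne'] at h₂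
  rw [riskPoly_eq_zero_iff hkm.le ht.ne'] at h
  exact (strictConvexOn_riskPolyTail hkm hβ).eq_or_eq_of_apply_eq hr₁ hr₂ ht hr₁₂
    (h₂.trans h₁.symm) (h.trans h₁.symm)

/-- Theorem 1, eq. (9): for `m ≥ 1`, `0 ≤ k ≤ m - 1`, and `β ∈ (0,1)`,
the equation
`C(m,k) t^{m-k} - (β/(2m)) ∑_{i=k}^{m-1} C(i,k) t^{i-k}
  - (β/(6m)) ∑_{i=m+1}^{4m} C(i,k) t^{i-k} = 0`
has exactly two solutions in `[0, +∞)`. -/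
theorem two_nonneg_roots_eq9 (m k : ℕ) (hm : 1 ≤ m) (hk : k ≤ m - 1)
    (β : ℝ) (hβ0 : 0 < β) (hβ1 : β < 1) :
    ({t : ℝ | 0 ≤ t ∧
        (m.choose k : ℝ) * t ^ (m - k)
          - (β / (2 * m)) * ∑ i ∈ Finset.Icc k (m - 1), (i.choose k : ℝ) * t ^ (i - k)
          - (β / (6 * m)) * ∑ i ∈ Finset.Icc (m + 1) (4 * m), (i.choose k : ℝ) * t ^ (i - k)
          = 0}).ncard = 2 := by
  have hkm : k < m := by omega
  change {t : ℝ | 0 ≤ t ∧ riskPoly m k β t = 0}.ncard = 2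
  have hkmR : (k : ℝ) ≤ m := by exact_mod_cast hkm.le
  set t₀ : ℝ := ((m : ℝ) + 1 - k) / (m + 1)
  have ht₀ : 0 ≤ t₀ := div_nonneg (by linarith) (by positivity)
  have ht₀B : t₀ ≤ 1 + 6 * m / β :=
    (div_le_one_of_le₀ (by linarith [(Nat.cast_nonneg k : (0 : ℝ) ≤ k)]) (by positivity)).trans
      (le_add_of_nonneg_right (by positivity))
  have hF₀ : riskPoly m k β 0 < 0 := by
    rw [riskPoly_zero hkm]
    exact neg_neg_of_pos (by positivity)
  have hFt₀ := riskPoly_pos hkm hβ0.le hβ1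
  obtain ⟨r₁, ⟨hr₁, hr₁t₀⟩, hFr₁⟩ :=
    intermediate_value_Ioo ht₀ (continuous_riskPoly m k β).continuousOn ⟨hF₀, hFt₀⟩
  obtain ⟨r₂, ⟨ht₀r₂, -⟩, hFr₂⟩ :=
    intermediate_value_Ioo' ht₀B (continuous_riskPoly m k β).continuousOn
      ⟨riskPoly_neg hkm hβ0, hFt₀⟩
  have hr₁₂ : r₁ < r₂ := hr₁t₀.trans ht₀r₂
  refine Set.ncard_eq_two.mpr ⟨r₁, r₂, hr₁₂.ne, Set.ext fun t => ⟨fun ⟨ht, hFt⟩ => ?_, ?_⟩⟩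
  · have ht' : 0 < t := ht.lt_of_ne (by rintro rfl; linarith)
    exact eq_or_eq_of_riskPoly_eq_zero hkm hβ0 hr₁ hr₁₂ hFr₁ hFr₂ ht' hFt
  · rintro (rfl | rfl)
    exacts [⟨hr₁.le, hFr₁⟩, ⟨hr₁.le.trans hr₁₂.le, hFr₂⟩]
end
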